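/- Let b ≥ 3 and r ≥ 1 be integers. Every tree with exactly b leaves, diameter 2r+1, and exactly br+2 vertices is isomorphic to a crab graph CG(b−ℓ, ℓ, r) for some integer 1 ≤ ℓ ≤ b−1. -/

import Mathlib

open scoped BigOperators
open Classical

/-- The Dirichlet energy of a function on a finite graph: `∑_{edges xy} (f x - f y)^2`. -/
noncomputable def dirichletEnergy {V : Type*} [Fintype V] (G : SimpleGraph V) (f : V → ℝ) : ℝ :=
  (∑ x : V, ∑ y : V, if G.Adj x y then (f x - f y) ^ 2 else 0) / 2

/-- The `k`-th Steklov (Dirichlet-to-Neumann) eigenvalue (1-indexed, in increasing order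
with multiplicity) of a finite graph `G` with boundary `B`, via the variational
(Courant–Fischer) characterization. -/
noncomputable def steklovEig {V : Type*} [Fintype V] (G : SimpleGraph V) (B : Finset V)
    (k : ℕ) : ℝ :=
  sInf { t : ℝ | ∃ F : Submodule ℝ (V → ℝ),
    Module.finrank ℝ (F.map (LinearMap.funLeft ℝ ℝ (fun x : {v // v ∈ B} => (x : V)))) = k ∧
    ∀ f ∈ F, dirichletEnergy G f ≤ t * ∑ x ∈ B, (f x) ^ 2 }

/-- The set of leaves (vertices of degree 1) of a finite graph, as a `Finset`. -/
noncomputable def leavesFinset {V : Type*} [Fintype V] (G : SimpleGraph V) : Finset V :=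
  Finset.univ.filter fun v => G.degree v = 1

/-- `σ_{k,max}(b,n)`: the maximum of the `k`-th Steklov eigenvalue over all trees with
`b` leaves (as boundary) and `n` vertices. -/
noncomputable def sigmaMax (k b n : ℕ) : ℝ :=
  sSup { s : ℝ | ∃ G : SimpleGraph (Fin n), G.IsTree ∧ (leavesFinset G).card = b ∧
    s = steklovEig G (leavesFinset G) k }

/-- `σ̃_{2,max}(D,n)`: the maximum of the first nontrivial Steklov eigenvalue over all
trees with diameter `D` and `n` vertices. -/
noncomputable def sigmaTildeMax (D n : ℕ) : ℝ :=
  sSup { s : ℝ | ∃ G : SimpleGraph (Fin n), G.IsTree ∧ G.diam = D ∧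
    s = steklovEig G (leavesFinset G) 2 }

/-- The crab graph `CG(b₁,b₂,r)`: an edge `u₀v₀` (`u₀ = Sum.inr (Sum.inr false)`,
`v₀ = Sum.inr (Sum.inr true)`) with `b₁` paths of length `r` attached at `u₀` and
`b₂` paths of length `r` attached at `v₀`. -/
def crabGraph (b₁ b₂ r : ℕ) :
    SimpleGraph ((Fin b₁ × Fin r) ⊕ (Fin b₂ × Fin r) ⊕ Bool) :=
  SimpleGraph.fromRel fun x y =>
    match x, y with
    | Sum.inr (Sum.inr false), Sum.inr (Sum.inr true) => True
    | Sum.inr (Sum.inr false), Sum.inl (_, i) => (i : ℕ) = 0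
    | Sum.inr (Sum.inr true), Sum.inr (Sum.inl (_, i)) => (i : ℕ) = 0
    | Sum.inl (ℓ, i), Sum.inl (m, j) => ℓ = m ∧ (j : ℕ) = (i : ℕ) + 1
    | Sum.inr (Sum.inl (ℓ, i)), Sum.inr (Sum.inl (m, j)) => ℓ = m ∧ (j : ℕ) = (i : ℕ) + 1
    | _, _ => False

/-!
Let `uv` be the middle edge of a diametral path `x ⋯ y` of length `2r + 1`, so that
`d(x, u) = d(v, y) = r`. Every vertex `w` closer to `u` than to `v` satisfies
`d(w, y) = d(w, u) + 1 + r`, hence `d(u, w) ≤ r`, and it lies on the geodesic from `u` to a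
leaf on its own side; symmetrically for `v`. So the `n - 2` vertices other than `u, v` are
covered by the `b` geodesics from the centre to the leaves, each contributing at most `r`
vertices. Since `n = br + 2` this covering is a bijection, which forces every leg to have
length exactly `r`. The resulting bijective homomorphism from the crab graph onto the tree
is an isomorphism, since every edge of a tree is a bridge and so must be the image of an
edge of the connected crab graph.
-/

namespace SimpleGraph

variable {V W : Type*} {G : SimpleGraph V} {a b u v w w' x y z : V} {r : ℕ}

namespace Walk

lemma dist_start_getVert {p : G.Walk u v} (hp : p.length = G.dist u v) {i : ℕ}
    (hi : i ≤ p.length) : G.dist u (p.getVert i) = i := by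
  rw [← length_eq_dist_of_subwalk hp (p.isSubwalk_take i), take_length, min_eq_left hi]

lemma dist_getVert_end {p : G.Walk u v} (hp : p.length = G.dist u v) (i : ℕ) :
    G.dist (p.getVert i) v = p.length - i := by
  rw [← length_eq_dist_of_subwalk hp (p.isSubwalk_drop i), drop_length]

lemma dist_add_dist_of_mem_support {p : G.Walk u v} (hp : p.length = G.dist u v)
    (hx : x ∈ p.support) : G.dist u x + G.dist x v = G.dist u v := by
  refine le_antisymm ?_ ((p.takeUntil x hx).reachable.dist_triangle_left v)
  have hlen := congrArg length (p.take_spec hx)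
  rw [length_append] at hlen
  exact hp ▸ hlen ▸ add_le_add (dist_le _) (dist_le _)

lemma le_length_of_injOn_getVert {p : G.Walk u v} (h : Set.InjOn p.getVert (Set.Iic r)) :
    r ≤ p.length := by
  by_contra! hlt
  have := h (Set.mem_Iic.2 hlt.le) (Set.mem_Iic.2 le_rfl)
    (by rw [p.getVert_length, p.getVert_of_length_le hlt.le])
  omega

end Walk

lemma exists_adj_dist_eq_of_diam_eq (h : G.diam = 2 * r + 1) :
    ∃ u v x y, G.Adj u v ∧ G.dist x u = r ∧ G.dist x v = r + 1 ∧
      G.dist y v = r ∧ G.dist y u = r + 1 := by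
  have := nontrivial_of_diam_ne_zero (G := G) (by omega)
  obtain ⟨x, y, hxy⟩ := G.exists_dist_eq_diam
  obtain ⟨p, hp⟩ := exists_walk_of_dist_ne_zero (by rw [hxy, h]; exact Nat.succ_ne_zero _)
  rw [hxy, h] at hp
  refine ⟨p.getVert r, p.getVert (r + 1), x, y, p.adj_getVert_succ (by omega), ?_, ?_, ?_, ?_⟩
  all_goals first
    | rw [p.dist_start_getVert (hp.trans (hxy.trans h).symm) (by omega)]
    | rw [dist_comm, p.dist_getVert_end (hp.trans (hxy.trans h).symm), hp]; omega

section Hom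

variable {H : SimpleGraph W}

/-- Every edge of an acyclic graph is a bridge, so the image of any walk from `a` to `a'`
must use the edge `f a f a'`, and by injectivity that edge comes from `a a'` itself. -/
lemma Hom.adj_iff_of_injective_of_isAcyclic (f : G →g H) (hf : Function.Injective f)
    (hG : G.Connected) (hH : H.IsAcyclic) {a a' : V} : H.Adj (f a) (f a') ↔ G.Adj a a' := by
  refine ⟨fun h => ?_, f.map_adj⟩
  have hmem := isBridge_iff_forall_walk_mem_edges.1
    (isAcyclic_iff_forall_adj_isBridge.1 hH h) ((hG.preconnected a a').some.map f)
  rw [Walk.edges_map, List.mem_map] at hmem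
  obtain ⟨e, he, hfe⟩ := hmem
  rw [← Sym2.map_mk, (Sym2.map.injective hf).eq_iff] at hfe
  exact Walk.adj_of_mem_edges _ (hfe ▸ he)

noncomputable def Hom.isoOfBijective (f : G →g H) (hf : Function.Bijective f)
    (hG : G.Connected) (hH : H.IsAcyclic) : G ≃g H :=
  { Equiv.ofBijective f hf with map_rel_iff' := f.adj_iff_of_injective_of_isAcyclic hf.1 hG hH }

end Hom

namespace IsTree

lemma getVert_dist_eq (hT : G.IsTree) {p : G.Walk x z} (hp : p.length = G.dist x z)
    (hw : G.dist x w + G.dist w z = G.dist x z) : p.getVert (G.dist x w) = w := by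
  obtain ⟨q₁, hq₁⟩ := hT.connected.exists_walk_length_eq_dist x w
  obtain ⟨q₂, hq₂⟩ := hT.connected.exists_walk_length_eq_dist w z
  have hq : (q₁.append q₂).length = G.dist x z := by rw [Walk.length_append, hq₁, hq₂, hw]
  have : q₁.append q₂ = p := congrArg Subtype.val <| (hT.isAcyclic.subsingleton_path x z).elim
    ⟨_, Walk.isPath_of_length_eq_dist _ hq⟩ ⟨_, Walk.isPath_of_length_eq_dist _ hp⟩
  rw [← this, Walk.getVert_append, ← hq₁]
  simp

lemma exists_getVert_succ_eq (hT : G.IsTree) {p : G.Walk u z} (hp : p.length = G.dist u z)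
    (hz : G.dist u z ≤ r) (hw : G.dist u w + G.dist w z = G.dist u z) (hwu : w ≠ u) :
    ∃ i : Fin r, p.getVert (i + 1) = w := by
  have := hT.connected.pos_dist_of_ne hwu.symm
  exact ⟨⟨G.dist u w - 1, by omega⟩, by
    simpa [Nat.sub_add_cancel this] using hT.getVert_dist_eq hp hw⟩

/-! For an edge `uv` of a tree, `G.dist w v = G.dist w u + 1` says that `w` lies on the side
of `u`; every vertex lies on exactly one side (`IsTree.dist_eq_dist_add_one_of_adj`). -/

lemma eq_of_adj_of_dist_eq_add_one (hT : G.IsTree) (huv : G.Adj u v) (hab : G.Adj a b)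
    (ha : G.dist a v = G.dist a u + 1) (hb : G.dist b u = G.dist b v + 1) : a = u := by
  have hab₁ : G.dist a b = 1 := dist_eq_one_iff_adj.2 hab
  have hbv : G.dist a b + G.dist b v = G.dist a v := by
    have := hT.dist_eq_dist_add_one_of_adj u hab
    have := hT.dist_eq_dist_add_one_of_adj v hab
    simp only [dist_comm (u := u), dist_comm (u := v)] at *
    omega
  obtain ⟨p, hp⟩ := hT.connected.exists_walk_length_eq_dist a u
  have hq : (p.concat huv).length = G.dist a v := by rw [Walk.length_concat, hp, ha]
  have hbq : b ∈ (p.concat huv).support :=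
    hT.getVert_dist_eq hq hbv ▸ Walk.getVert_mem_support _ _
  rw [Walk.support_concat, List.mem_append, List.mem_singleton] at hbq
  rcases hbq with hbp | rfl
  · have := p.dist_add_dist_of_mem_support hp hbp
    omega
  · exact hT.connected.dist_eq_zero_iff.1 (by simp at hbv; omega)

/-- A geodesic from one side to the other crosses at a boundary dart, which can only be `uv`. -/
lemma dist_eq_dist_add_one_add_dist (hT : G.IsTree) (huv : G.Adj u v)
    (hw : G.dist w v = G.dist w u + 1) (hw' : G.dist w' u = G.dist w' v + 1) :
    G.dist w w' = G.dist w u + 1 + G.dist v w' := by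
  obtain ⟨p, hp⟩ := hT.connected.exists_walk_length_eq_dist w w'
  obtain ⟨d, hd, hd₁, hd₂⟩ := p.exists_boundary_dart {t | G.dist t v = G.dist t u + 1} hw
    (show ¬ G.dist w' v = G.dist w' u + 1 by omega)
  have hd₂' : G.dist d.snd u = G.dist d.snd v + 1 :=
    (hT.dist_eq_dist_add_one_of_adj d.snd huv).resolve_right hd₂
  have hu : u ∈ p.support :=
    hT.eq_of_adj_of_dist_eq_add_one huv d.adj hd₁ hd₂' ▸ p.dart_fst_mem_support_of_mem_darts hd
  have := p.dist_add_dist_of_mem_support hp hu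
  have : G.dist u w' = G.dist w' u := dist_comm
  have : G.dist v w' = G.dist w' v := dist_comm
  omega

lemma dist_eq_dist_add_one_of_dist_add_dist_eq (hT : G.IsTree) (huv : G.Adj u v)
    (hw : G.dist w v = G.dist w u + 1) (hwu : w ≠ u)
    (hwz : G.dist u w + G.dist w z = G.dist u z) : G.dist z v = G.dist z u + 1 := by
  refine (hT.dist_eq_dist_add_one_of_adj z huv).resolve_left fun hz => hwu ?_
  have := hT.dist_eq_dist_add_one_add_dist huv hw hz
  have : G.dist u w = G.dist w u := dist_comm
  have : G.dist u z = G.dist z u := dist_comm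
  have : G.dist v z = G.dist z v := dist_comm
  exact hT.connected.dist_eq_zero_iff.1 (by omega)

lemma dist_le_of_dist_eq_add_one (hT : G.IsTree) (huv : G.Adj u v)
    (hdiam : ∀ a c, G.dist a c ≤ 2 * r + 1) (hy : G.dist y u = G.dist y v + 1)
    (hyv : G.dist y v = r) (hw : G.dist w v = G.dist w u + 1) : G.dist u w ≤ r := by
  have := hT.dist_eq_dist_add_one_add_dist huv hw hy
  have := hdiam w y
  have : G.dist u w = G.dist w u := dist_comm
  have : G.dist v y = G.dist y v := dist_comm
  omega

open Finset in
lemma card_filter_add_card_filter_of_adj (hT : G.IsTree) (huv : G.Adj u v) (s : Finset V) :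
    #(s.filter fun z => G.dist z v = G.dist z u + 1) +
      #(s.filter fun z => G.dist z u = G.dist z v + 1) = #s := by
  rw [← card_filter_add_card_filter_not (s := s) (fun z => G.dist z v = G.dist z u + 1)]
  congr 2
  exact filter_congr fun z _ => by
    have := hT.dist_eq_dist_add_one_of_adj z huv
    constructor <;> intro <;> omega

variable [Fintype V]

/-- A vertex `z` farthest from `u` among those with `w` between `u` and `z` is a leaf: all its
neighbours are closer to `u`, and in a tree only one neighbour can be. -/
lemma exists_mem_leavesFinset (hT : G.IsTree) (hwu : u ≠ w) :
    ∃ z ∈ leavesFinset G, G.dist u w + G.dist w z = G.dist u z := by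
  obtain ⟨z, hz, hmax⟩ := (Finset.univ.filter fun z => G.dist u w + G.dist w z = G.dist u z)
    |>.exists_max_image (G.dist u) ⟨w, by simp⟩
  simp only [Finset.mem_filter, Finset.mem_univ, true_and] at hz hmax
  refine ⟨z, ?_, hz⟩
  obtain ⟨p, hp⟩ := hT.connected.exists_walk_length_eq_dist u z
  have hnil : ¬ p.Nil := by
    have := hT.connected.pos_dist_of_ne hwu
    rw [← Walk.length_eq_zero_iff]
    omega
  have hnbr : ∀ n, G.Adj n z → n = p.penultimate := by
    intro n hn
    have hcloser : G.dist u n + 1 = G.dist u z := by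
      rcases hT.dist_eq_dist_add_one_of_adj u hn with h | h
      · have := hT.connected.dist_triangle (u := w) (v := z) (w := n)
        have := hT.connected.dist_triangle (u := u) (v := w) (w := n)
        have := hmax n (by rw [dist_eq_one_iff_adj.2 hn.symm] at *; omega)
        omega
      · exact h.symm
    have := hT.getVert_dist_eq hp (w := n) (by rw [dist_eq_one_iff_adj.2 hn]; omega)
    rw [Walk.penultimate, ← this]
    congr 1
    omega
  simp only [leavesFinset, Finset.mem_filter, Finset.mem_univ, true_and,
    ← card_neighborFinset_eq_degree, Finset.card_eq_one]
  exact ⟨p.penultimate, Finset.eq_singleton_iff_unique_mem.2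
    ⟨by simpa using (p.adj_penultimate hnil).symm,
      fun n hn => hnbr n (by simpa using hn : G.Adj z n).symm⟩⟩

lemma exists_mem_filter_leavesFinset (hT : G.IsTree) (huv : G.Adj u v)
    (hw : G.dist w v = G.dist w u + 1) (hwu : w ≠ u) :
    ∃ z ∈ (leavesFinset G).filter (fun z => G.dist z v = G.dist z u + 1),
      G.dist u w + G.dist w z = G.dist u z := by
  obtain ⟨z, hz, hwz⟩ := hT.exists_mem_leavesFinset hwu.symm
  exact ⟨z, Finset.mem_filter.2 ⟨hz, hT.dist_eq_dist_add_one_of_dist_add_dist_eq huv hw hwu hwz⟩,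
    hwz⟩

end IsTree

end SimpleGraph

section Crab

open SimpleGraph

variable {V : Type*} {b₁ b₂ r : ℕ}

lemma crabGraph_reachable_inl (l : Fin b₁) (i : ℕ) (hi : i < r) :
    (crabGraph b₁ b₂ r).Reachable (.inr (.inr false)) (.inl (l, ⟨i, hi⟩)) := by
  induction i with
  | zero => exact Adj.reachable (by simp [crabGraph])
  | succ i ih => exact (ih (by omega)).trans (Adj.reachable (by simp [crabGraph]))

lemma crabGraph_reachable_inr_inl (l : Fin b₂) (i : ℕ) (hi : i < r) :
    (crabGraph b₁ b₂ r).Reachable (.inr (.inr true)) (.inr (.inl (l, ⟨i, hi⟩))) := by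
  induction i with
  | zero => exact Adj.reachable (by simp [crabGraph])
  | succ i ih => exact (ih (by omega)).trans (Adj.reachable (by simp [crabGraph]))

lemma crabGraph_connected : (crabGraph b₁ b₂ r).Connected := by
  have hc : (crabGraph b₁ b₂ r).Reachable (.inr (.inr false)) (.inr (.inr true)) :=
    Adj.reachable (by simp [crabGraph])
  refine (connected_iff_exists_forall_reachable _).2 ⟨.inr (.inr false), ?_⟩
  rintro (⟨l, i, hi⟩ | ⟨l, i, hi⟩ | _ | _)
  · exact crabGraph_reachable_inl l i hi
  · exact hc.trans (crabGraph_reachable_inr_inl l i hi)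
  · rfl
  · exact hc

def crabMap (r : ℕ) (u v : V) (f : Fin b₁ → ℕ → V) (g : Fin b₂ → ℕ → V) :
    (Fin b₁ × Fin r) ⊕ (Fin b₂ × Fin r) ⊕ Bool → V
  | .inl (l, i) => f l (i + 1)
  | .inr (.inl (l, i)) => g l (i + 1)
  | .inr (.inr false) => u
  | .inr (.inr true) => v

variable {u v : V} {f : Fin b₁ → ℕ → V} {g : Fin b₂ → ℕ → V}

lemma crabMap_adj {G : SimpleGraph V} (huv : G.Adj u v) (hf₀ : ∀ l, f l 0 = u)
    (hg₀ : ∀ l, g l 0 = v) (hf : ∀ l k, k < r → G.Adj (f l k) (f l (k + 1)))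
    (hg : ∀ l k, k < r → G.Adj (g l k) (g l (k + 1)))
    {a a' : (Fin b₁ × Fin r) ⊕ (Fin b₂ × Fin r) ⊕ Bool} (h : (crabGraph b₁ b₂ r).Adj a a') :
    G.Adj (crabMap r u v f g a) (crabMap r u v f g a') := by
  rcases a with ⟨l, i⟩ | ⟨l, i⟩ | _ | _ <;> rcases a' with ⟨m, j⟩ | ⟨m, j⟩ | _ | _ <;>
    simp [crabGraph] at h <;> simp only [crabMap]
  · obtain ⟨-, ⟨rfl, hj⟩ | ⟨rfl, hi⟩⟩ := h
    · exact hj ▸ hf l _ (by omega)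
    · exact hi ▸ (hf _ _ (by omega)).symm
  · exact hf₀ l ▸ h ▸ (hf l 0 (h ▸ i.2)).symm
  · obtain ⟨-, ⟨rfl, hj⟩ | ⟨rfl, hi⟩⟩ := h
    · exact hj ▸ hg l _ (by omega)
    · exact hi ▸ (hg _ _ (by omega)).symm
  · exact hg₀ l ▸ h ▸ (hg l 0 (h ▸ i.2)).symm
  · exact hf₀ m ▸ h ▸ hf m 0 (h ▸ j.2)
  · exact huv
  · exact hg₀ m ▸ h ▸ hg m 0 (h ▸ j.2)
  · exact huv.symm

lemma injOn_left_of_injective_crabMap (hinj : Function.Injective (crabMap r u v f g))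
    (hf₀ : ∀ l, f l 0 = u) (l : Fin b₁) : Set.InjOn (f l) (Set.Iic r) := by
  have key : ∀ k (hk : k ≤ r), f l k = crabMap r u v f g
      (if h : k = 0 then .inr (.inr false) else .inl (l, ⟨k - 1, by omega⟩)) := by
    intro k hk
    split_ifs with h
    · simp [crabMap, h, hf₀]
    · simp only [crabMap]; congr; omega
  intro i hi j hj hij
  have := hinj ((key i hi).symm.trans (hij.trans (key j hj)))
  split_ifs at this <;> simp at this <;> omega

lemma injOn_right_of_injective_crabMap (hinj : Function.Injective (crabMap r u v f g))
    (hg₀ : ∀ l, g l 0 = v) (l : Fin b₂) : Set.InjOn (g l) (Set.Iic r) := by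
  have key : ∀ k (hk : k ≤ r), g l k = crabMap r u v f g
      (if h : k = 0 then .inr (.inr true) else .inr (.inl (l, ⟨k - 1, by omega⟩))) := by
    intro k hk
    split_ifs with h
    · simp [crabMap, h, hg₀]
    · simp only [crabMap]; congr; omega
  intro i hi j hj hij
  have := hinj ((key i hi).symm.trans (hij.trans (key j hj)))
  split_ifs at this <;> simp at this <;> omega

open Finset in
theorem SimpleGraph.IsTree.nonempty_iso_crabGraph [Fintype V] {T : SimpleGraph V}
    (hT : T.IsTree) (huv : T.Adj u v) (L₁ L₂ : Finset V)
    (hL₁ : ∀ z ∈ L₁, T.dist u z ≤ r) (hL₂ : ∀ z ∈ L₂, T.dist v z ≤ r)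
    (hcover : ∀ w, w ≠ u → w ≠ v → (∃ z ∈ L₁, T.dist u w + T.dist w z = T.dist u z) ∨
      ∃ z ∈ L₂, T.dist v w + T.dist w z = T.dist v z)
    (hcard : Fintype.card V = (#L₁ + #L₂) * r + 2) :
    Nonempty (T ≃g crabGraph #L₁ #L₂ r) := by
  choose p hp using hT.connected.exists_walk_length_eq_dist u
  choose q hq using hT.connected.exists_walk_length_eq_dist v
  set f : Fin #L₁ → ℕ → V := fun l => (p (L₁.equivFin.symm l)).getVert
  set g : Fin #L₂ → ℕ → V := fun l => (q (L₂.equivFin.symm l)).getVert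
  have hsurj : (crabMap r u v f g).Surjective := by
    intro w
    by_cases hwu : w = u
    · exact ⟨.inr (.inr false), hwu.symm⟩
    by_cases hwv : w = v
    · exact ⟨.inr (.inr true), hwv.symm⟩
    rcases hcover w hwu hwv with ⟨z, hz, hwz⟩ | ⟨z, hz, hwz⟩
    · obtain ⟨l, rfl⟩ : ∃ l, (L₁.equivFin.symm l : V) = z := ⟨L₁.equivFin ⟨z, hz⟩, by simp⟩
      obtain ⟨i, hi⟩ := hT.exists_getVert_succ_eq (hp _) (hL₁ _ hz) hwz hwu
      exact ⟨.inl (l, i), hi⟩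
    · obtain ⟨l, rfl⟩ : ∃ l, (L₂.equivFin.symm l : V) = z := ⟨L₂.equivFin ⟨z, hz⟩, by simp⟩
      obtain ⟨i, hi⟩ := hT.exists_getVert_succ_eq (hq _) (hL₂ _ hz) hwz hwv
      exact ⟨.inr (.inl (l, i)), hi⟩
  have hbij : (crabMap r u v f g).Bijective :=
    (Fintype.bijective_iff_surjective_and_card _).2 ⟨hsurj, by simp [hcard]; ring⟩
  have hf₀ : ∀ l, f l 0 = u := fun l => Walk.getVert_zero _
  have hg₀ : ∀ l, g l 0 = v := fun l => Walk.getVert_zero _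
  -- by injectivity no leg is shorter than `r`: otherwise its end would be hit twice
  have hf l k (hk : k < r) : T.Adj (f l k) (f l (k + 1)) := Walk.adj_getVert_succ _
    (hk.trans_le (Walk.le_length_of_injOn_getVert (injOn_left_of_injective_crabMap hbij.1 hf₀ l)))
  have hg l k (hk : k < r) : T.Adj (g l k) (g l (k + 1)) := Walk.adj_getVert_succ _
    (hk.trans_le (Walk.le_length_of_injOn_getVert (injOn_right_of_injective_crabMap hbij.1 hg₀ l)))
  exact ⟨(Hom.isoOfBijective ⟨_, crabMap_adj huv hf₀ hg₀ hf hg⟩ hbij crabGraph_connected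
    hT.isAcyclic).symm⟩

end Crab

open SimpleGraph Finset in
theorem stmt16_general {V : Type*} [Fintype V] (T : SimpleGraph V) (b r : ℕ)
    (hr : 1 ≤ r) (hT : T.IsTree)
    (hleaves : (leavesFinset T).card = b) (hdiam : T.diam = 2 * r + 1)
    (hcard : Fintype.card V = b * r + 2) :
    ∃ ℓ : ℕ, 1 ≤ ℓ ∧ ℓ ≤ b - 1 ∧ Nonempty (T ≃g crabGraph (b - ℓ) ℓ r) := by
  obtain ⟨u, v, x, y, huv, hxu, hxv, hyv, hyu⟩ := exists_adj_dist_eq_of_diam_eq hdiam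
  have hD a c : T.dist a c ≤ 2 * r + 1 :=
    hdiam ▸ dist_le_diam (ediam_ne_top_of_diam_ne_zero (by omega))
  set L₁ := (leavesFinset T).filter fun z => T.dist z v = T.dist z u + 1
  set L₂ := (leavesFinset T).filter fun z => T.dist z u = T.dist z v + 1
  have hL : #L₁ + #L₂ = b := hleaves ▸ hT.card_filter_add_card_filter_of_adj huv _
  obtain ⟨z₁, hz₁, -⟩ := hT.exists_mem_filter_leavesFinset huv (w := x) (by omega)
    (by rintro rfl; simp at hxu; omega)
  obtain ⟨z₂, hz₂, -⟩ := hT.exists_mem_filter_leavesFinset huv.symm (w := y) (by omega)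
    (by rintro rfl; simp at hyv; omega)
  have h₁ : 0 < #L₁ := card_pos.2 ⟨z₁, hz₁⟩
  refine ⟨#L₂, card_pos.2 ⟨z₂, hz₂⟩, by omega, ?_⟩
  rw [show b - #L₂ = #L₁ by omega]
  refine hT.nonempty_iso_crabGraph huv L₁ L₂
    (fun z hz => hT.dist_le_of_dist_eq_add_one huv hD (by omega) hyv (mem_filter.1 hz).2)
    (fun z hz => hT.dist_le_of_dist_eq_add_one huv.symm hD (by omega) hxu (mem_filter.1 hz).2)
    (fun w hwu hwv => ?_) (by rw [hcard, hL])
  rcases hT.dist_eq_dist_add_one_of_adj w huv with h | h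
  · exact .inr (hT.exists_mem_filter_leavesFinset huv.symm h hwv)
  · exact .inl (hT.exists_mem_filter_leavesFinset huv h hwu)

/-- Let `b ≥ 3` and `r ≥ 1` be integers. Every tree with exactly `b`
leaves, diameter `2r + 1`, and exactly `br + 2` vertices is isomorphic to a crab graph
`CG(b - ℓ, ℓ, r)` for some integer `1 ≤ ℓ ≤ b - 1`. -/
theorem stmt16 {V : Type*} [Fintype V] [DecidableEq V] (T : SimpleGraph V) (b r : ℕ)
    (hb : 3 ≤ b) (hr : 1 ≤ r) (hT : T.IsTree)
    (hleaves : (leavesFinset T).card = b) (hdiam : T.diam = 2 * r + 1)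
    (hcard : Fintype.card V = b * r + 2) :
    ∃ ℓ : ℕ, 1 ≤ ℓ ∧ ℓ ≤ b - 1 ∧ Nonempty (T ≃g crabGraph (b - ℓ) ℓ r) :=
  stmt16_general T b r hr hT hleaves hdiam hcard
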